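/- arXiv:2504.17467 — 5 statements merged into one kernel-verified Lean document; each statement's English description precedes it below -/
import Mathlib

section
/- The matching produced by the doctor-proposing deferred acceptance algorithm in a two-sided matching market with responsive hospital preferences is stable: it is individually rational and admits no blocking pair. -/
open Finset

variable {D H : Type*} [Fintype D] [DecidableEq D] [Fintype H] [DecidableEq H]

/-- The hospital doctor `d` proposes to, given the set `A` of (doctor, hospital)
pairs `(d, h)` such that `h` has already rejected `d`.  Doctor preferences are
given by `pref d`, the list of `d`'s acceptable hospitals in order of strict
preference. -/
def propose (pref : D → List H) (A : Finset (D × H)) (d : D) : Option H :=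
  (pref d).find? (fun h => decide ((d, h) ∉ A))

/-- The set of doctors currently applying to hospital `h`. -/
def proposers (pref : D → List H) (A : Finset (D × H)) (h : H) : Finset D :=
  univ.filter (fun d => propose pref A d = some h)

/-- The (up to) `n` best doctors of `S` according to hospital `h`'s strict
priority order (lower `prio h` value means more preferred). -/
def topN (prio : H → D → ℕ) (h : H) (n : ℕ) (S : Finset D) : Finset D :=
  S.filter (fun d => (S.filter (fun d' => prio h d' < prio h d)).card < n)

/-- The doctors tentatively kept by hospital `h`: the best acceptable applicants,
up to the capacity `q h`. -/
def kept (pref : D → List H) (prio : H → D → ℕ) (acc : H → Finset D) (q : H → ℕ)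
    (A : Finset (D × H)) (h : H) : Finset D :=
  topN prio h (q h) (proposers pref A h ∩ acc h)

/-- One round of the doctor-proposing deferred acceptance algorithm, recorded via
the set of rejections so far: every applicant not tentatively kept is rejected. -/
def daStep (pref : D → List H) (prio : H → D → ℕ) (acc : H → Finset D) (q : H → ℕ)
    (A : Finset (D × H)) : Finset (D × H) :=
  A ∪ univ.filter (fun p : D × H =>
    propose pref A p.1 = some p.2 ∧ p.1 ∉ kept pref prio acc q A p.2)

/-- The outcome of the doctor-proposing deferred acceptance algorithm. -/
def daMatch (pref : D → List H) (prio : H → D → ℕ) (acc : H → Finset D) (q : H → ℕ)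
    (d : D) : Option H :=
  propose pref ((daStep pref prio acc q)^[Fintype.card D * Fintype.card H + 1] ∅) d

/-- The set of doctors matched to hospital `h` under matching `μ`. -/
def matchedSet (μ : D → Option H) (h : H) : Finset D :=
  univ.filter (fun d => μ d = some h)

/-- The rank of an outcome in doctor `d`'s preference list (smaller is better;
being unmatched ranks just below the least preferred acceptable hospital). -/
def rankOf (pref : D → List H) (d : D) : Option H → ℕ
  | none => (pref d).length
  | some h => (pref d).idxOf h

/-- Doctor `d` strictly prefers hospital `h` to outcome `o`. -/
def DPrefers (pref : D → List H) (d : D) (h : H) (o : Option H) : Prop :=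
  h ∈ pref d ∧ rankOf pref d (some h) < rankOf pref d o

/-- Individual rationality: nobody is matched with an unacceptable partner. -/
def IndivRat (pref : D → List H) (acc : H → Finset D) (μ : D → Option H) : Prop :=
  ∀ d h, μ d = some h → h ∈ pref d ∧ d ∈ acc h

/-- `(d, h)` is a blocking pair of `μ`. -/
def Blocks (pref : D → List H) (prio : H → D → ℕ) (acc : H → Finset D) (q : H → ℕ)
    (μ : D → Option H) (d : D) (h : H) : Prop :=
  DPrefers pref d h (μ d) ∧
    (((matchedSet μ h).card < q h ∧ d ∈ acc h) ∨
      ∃ d' ∈ matchedSet μ h, prio h d < prio h d')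

/-- Stability: individual rationality, capacities respected, and no blocking pair. -/
def IsStable (pref : D → List H) (prio : H → D → ℕ) (acc : H → Finset D) (q : H → ℕ)
    (μ : D → Option H) : Prop :=
  IndivRat pref acc μ ∧ (∀ h, (matchedSet μ h).card ≤ q h) ∧
    ∀ d h, ¬ Blocks pref prio acc q μ d h

/-!
Record the run of deferred acceptance by the growing set `A` of rejections. The invariant is that
whenever `h` has rejected an acceptable doctor `d`, the doctors `h` currently keeps fill its
capacity and all have priority over `d`. It survives a round because the doctors `h` kept are
still applying to it in the next round, and `h` keeps the best applicants. Rejections only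
accumulate, so the run reaches a fixed point within `|D| * |H|` rounds, where every applicant is
kept. A doctor who prefers `h` to his match has been rejected by `h`, so by the invariant `h` is
full of doctors it ranks above him, and `(d, h)` cannot block.
-/

lemma List.find?_eq_some_of_imp {α : Type*} {p p' : α → Bool} {l : List α} {b : α}
    (hp : ∀ x, p' x → p x) (hb : p' b) (h : l.find? p = some b) : l.find? p' = some b := by
  induction l with
  | nil => simp at h
  | cons a t ih => grind

lemma List.eq_false_of_find?_eq_some_of_idxOf_lt {α : Type*} [DecidableEq α] {p : α → Bool}
    {l : List α} {a b : α} (h : l.find? p = some b) (ha : a ∈ l) (hab : l.idxOf a < l.idxOf b) :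
    p a = false := by
  induction l with
  | nil => simp at ha
  | cons c t ih => grind

lemma Finset.isFixedPt_iterate_of_subset {α : Type*} [Fintype α] {f : Finset α → Finset α}
    (hf : ∀ s, s ⊆ f s) (s : Finset α) {n : ℕ} (hn : Fintype.card α ≤ n) :
    Function.IsFixedPt f (f^[n] s) := by
  have grows_strictly :
      ∀ k, ¬ Function.IsFixedPt f (f^[k] s) → #(f^[k] s) < #(f^[k + 1] s) := by
    intro k hk
    rw [Function.iterate_succ_apply']
    exact card_lt_card (ssubset_of_subset_of_ne (hf _) (Ne.symm hk))
  have grows : ∀ k, ¬ Function.IsFixedPt f (f^[k] s) → k < #(f^[k + 1] s) := by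
    intro k hk
    induction k with
    | zero => exact Nat.zero_lt_of_lt (grows_strictly 0 hk)
    | succ k ih =>
      have hk' : ¬ Function.IsFixedPt f (f^[k] s) := fun hfix =>
        hk (by rw [Function.iterate_succ_apply', hfix.eq]; exact hfix)
      have := grows_strictly (k + 1) hk
      have := ih hk'
      omega
  by_contra hnot
  have := card_le_univ (f^[n + 1] s)
  have := grows n hnot
  omega

section TopN

variable {D H : Type*} (prio : H → D → ℕ) (h : H)

def prioRank (S : Finset D) (d : D) : ℕ :=
  #(S.filter fun d' => prio h d' < prio h d)

variable {prio h}

lemma topN_eq_filter_prioRank_lt (n : ℕ) (S : Finset D) :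
    topN prio h n S = S.filter fun d => prioRank prio h S d < n := rfl

lemma topN_subset {n : ℕ} {S : Finset D} : topN prio h n S ⊆ S :=
  filter_subset _ _

lemma prioRank_le_prioRank {S : Finset D} {a b : D} (hab : prio h a ≤ prio h b) :
    prioRank prio h S a ≤ prioRank prio h S b :=
  card_le_card (monotone_filter_right S fun _ _ hx => hx.trans_le hab)

lemma prioRank_lt_prioRank {S : Finset D} {a b : D} (ha : a ∈ S) (hab : prio h a < prio h b) :
    prioRank prio h S a < prioRank prio h S b := by
  refine card_lt_card ⟨monotone_filter_right S fun _ _ hx => hx.trans hab, fun hsub => ?_⟩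
  exact lt_irrefl _ (mem_filter.mp (hsub (mem_filter.mpr ⟨ha, hab⟩))).2

lemma prioRank_lt_card {S : Finset D} {d : D} (hd : d ∈ S) : prioRank prio h S d < #S :=
  card_lt_card (filter_ssubset.mpr ⟨d, hd, lt_irrefl _⟩)

lemma card_topN (hinj : Function.Injective (prio h)) (n : ℕ) (S : Finset D) :
    #(topN prio h n S) = min n #S := by
  have hinjOn : Set.InjOn (prioRank prio h S) S := by
    intro a ha b hb hab
    by_contra hne
    rcases lt_or_gt_of_ne (hinj.ne hne) with hlt | hlt
    · exact (prioRank_lt_prioRank ha hlt).ne hab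
    · exact (prioRank_lt_prioRank hb hlt).ne' hab
  have himage : S.image (prioRank prio h S) = range #S :=
    eq_of_subset_of_card_le
      (fun _ hi => by
        obtain ⟨d, hd, rfl⟩ := mem_image.mp hi
        exact mem_range.mpr (prioRank_lt_card hd))
      (by rw [card_range, card_image_of_injOn hinjOn])
  rw [topN_eq_filter_prioRank_lt, ← card_image_of_injOn (hinjOn.mono (filter_subset _ _)),
    ← filter_image (p := (· < n)), himage]
  rw [show (range #S).filter (· < n) = range (min n #S) by ext; simp; omega, card_range]

lemma lt_of_mem_topN {n : ℕ} {S : Finset D} {d x : D} (hd : n ≤ prioRank prio h S d)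
    (hx : x ∈ topN prio h n S) : prio h x < prio h d := by
  rw [topN_eq_filter_prioRank_lt, mem_filter] at hx
  exact lt_of_not_ge fun hle => (hx.2.trans_le hd).not_ge (prioRank_le_prioRank hle)

lemma topN_full_of_subset (hinj : Function.Injective (prio h)) {n : ℕ} {S W : Finset D} {d : D}
    (hWS : W ⊆ S) (hW : n ≤ #W) (hWd : ∀ w ∈ W, prio h w < prio h d) :
    #(topN prio h n S) = n ∧ ∀ x ∈ topN prio h n S, prio h x < prio h d := by
  refine ⟨by rw [card_topN hinj]; exact min_eq_left (hW.trans (card_le_card hWS)), ?_⟩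
  refine fun x hx => lt_of_mem_topN (hW.trans (card_le_card ?_)) hx
  exact fun w hw => mem_filter.mpr ⟨hWS hw, hWd w hw⟩

end TopN

section Propose

variable {D H : Type*} [DecidableEq D] [DecidableEq H] {pref : D → List H}
  {A A' : Finset (D × H)} {d : D} {h : H}

lemma propose_notMem (hp : propose pref A d = some h) : (d, h) ∉ A := by
  simpa using List.find?_some hp

lemma mem_pref_of_propose (hp : propose pref A d = some h) : h ∈ pref d :=
  List.mem_of_find?_eq_some hp

lemma propose_eq_of_subset (hA : A ⊆ A') (hdh : (d, h) ∉ A') (hp : propose pref A d = some h) :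
    propose pref A' d = some h :=
  List.find?_eq_some_of_imp (fun _ hx => decide_eq_true (mt (@hA _) (of_decide_eq_true hx)))
    (decide_eq_true hdh) hp

lemma mem_of_dPrefers_propose (hpref : DPrefers pref d h (propose pref A d)) : (d, h) ∈ A := by
  obtain ⟨hmem, hrank⟩ := hpref
  by_contra hdh
  have hnotRejected : decide ((d, h) ∉ A) = true := decide_eq_true hdh
  cases hp : propose pref A d with
  | none => exact List.find?_eq_none.mp hp h hmem hnotRejected
  | some h₀ =>
    rw [hp] at hrank
    have := List.eq_false_of_find?_eq_some_of_idxOf_lt (p := fun h' => decide ((d, h') ∉ A))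
      hp hmem hrank
    exact Bool.false_ne_true (this.symm.trans hnotRejected)

end Propose

section DeferredAcceptance

variable {pref : D → List H} {prio : H → D → ℕ} {acc : H → Finset D} {q : H → ℕ}
  {A : Finset (D × H)} {h : H}

lemma subset_daStep (A : Finset (D × H)) : A ⊆ daStep pref prio acc q A :=
  subset_union_left

lemma kept_subset_proposers_daStep :
    kept pref prio acc q A h ⊆ proposers pref (daStep pref prio acc q A) h ∩ acc h := by
  intro d hd
  obtain ⟨hprop, hacc⟩ := mem_inter.mp (topN_subset hd)
  have hp : propose pref A d = some h := (mem_filter.mp hprop).2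
  have hdh : (d, h) ∉ daStep pref prio acc q A := fun hrejected => by
    rcases mem_union.mp hrejected with hold | hnew
    · exact propose_notMem hp hold
    · exact (mem_filter.mp hnew).2.2 hd
  have hp' := propose_eq_of_subset (subset_daStep A) hdh hp
  exact mem_inter.mpr ⟨mem_filter.mpr ⟨mem_univ _, hp'⟩, hacc⟩

variable (pref prio acc q) in
def RejectionsJustified (A : Finset (D × H)) : Prop :=
  ∀ d h, (d, h) ∈ A → d ∈ acc h →
    #(kept pref prio acc q A h) = q h ∧ ∀ d' ∈ kept pref prio acc q A h, prio h d' < prio h d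

lemma RejectionsJustified.daStep (hinj : ∀ h, Function.Injective (prio h))
    (hA : RejectionsJustified pref prio acc q A) :
    RejectionsJustified pref prio acc q (daStep pref prio acc q A) := by
  intro d h hdh hacc
  have hkept : #(kept pref prio acc q A h) = q h ∧
      ∀ d' ∈ kept pref prio acc q A h, prio h d' < prio h d := by
    rcases mem_union.mp hdh with hold | hnew
    · exact hA d h hold hacc
    · obtain ⟨-, hp, hnotKept⟩ := mem_filter.mp hnew
      have hd : d ∈ proposers pref A h ∩ acc h :=
        mem_inter.mpr ⟨mem_filter.mpr ⟨mem_univ _, hp⟩, hacc⟩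
      have hrank : q h ≤ prioRank prio h (proposers pref A h ∩ acc h) d :=
        not_lt.mp fun hlt => hnotKept (mem_filter.mpr ⟨hd, hlt⟩)
      exact topN_full_of_subset (hinj h) (filter_subset _ _) hrank fun _ hw => (mem_filter.mp hw).2
  exact topN_full_of_subset (hinj h) kept_subset_proposers_daStep hkept.1.ge hkept.2

lemma rejectionsJustified_iterate (hinj : ∀ h, Function.Injective (prio h)) (n : ℕ) :
    RejectionsJustified pref prio acc q ((daStep pref prio acc q)^[n] ∅) := by
  induction n with
  | zero => simp [RejectionsJustified]
  | succ n ih =>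
    rw [Function.iterate_succ_apply']
    exact ih.daStep hinj

lemma matchedSet_propose_of_isFixedPt (hfix : Function.IsFixedPt (daStep pref prio acc q) A) :
    matchedSet (propose pref A) h = kept pref prio acc q A h := by
  refine Subset.antisymm (fun d hd => ?_) (topN_subset.trans inter_subset_left)
  by_contra hnotKept
  have hrejected : (d, h) ∈ daStep pref prio acc q A :=
    mem_union_right _ (mem_filter.mpr ⟨mem_univ _, (mem_filter.mp hd).2, hnotKept⟩)
  exact propose_notMem (mem_filter.mp hd).2 (hfix.eq ▸ hrejected)

theorem isStable_of_isFixedPt (hinj : ∀ h, Function.Injective (prio h))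
    (hcons : ∀ h d d', prio h d < prio h d' → d' ∈ acc h → d ∈ acc h)
    (hfix : Function.IsFixedPt (daStep pref prio acc q) A)
    (hA : RejectionsJustified pref prio acc q A) :
    IsStable pref prio acc q (propose pref A) := by
  have hkept : ∀ {d h}, d ∈ matchedSet (propose pref A) h → d ∈ acc h := fun hd =>
    (mem_inter.mp (topN_subset (matchedSet_propose_of_isFixedPt hfix ▸ hd))).2
  refine ⟨?_, fun h => ?_, ?_⟩
  · exact fun d h hdh => ⟨mem_pref_of_propose hdh, hkept (mem_filter.mpr ⟨mem_univ _, hdh⟩)⟩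
  · rw [matchedSet_propose_of_isFixedPt hfix, kept, card_topN (hinj h)]
    exact min_le_left _ _
  · rintro d h ⟨hpref, hblock⟩
    have hdh := mem_of_dPrefers_propose hpref
    rcases hblock with ⟨hlt, hd⟩ | ⟨d', hd', hlt⟩
    · rw [matchedSet_propose_of_isFixedPt hfix, (hA d h hdh hd).1] at hlt
      exact lt_irrefl _ hlt
    · have hd := hcons h d d' hlt (hkept hd')
      rw [matchedSet_propose_of_isFixedPt hfix] at hd'
      exact lt_asymm hlt ((hA d h hdh hd).2 d' hd')

end DeferredAcceptance

theorem da_stable_general (pref : D → List H) (prio : H → D → ℕ) (acc : H → Finset D)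
    (q : H → ℕ) (hinj : ∀ h, Function.Injective (prio h))
    (hcons : ∀ h d d', prio h d < prio h d' → d' ∈ acc h → d ∈ acc h) :
    IsStable pref prio acc q (daMatch pref prio acc q) := by
  have hfix : Function.IsFixedPt (daStep pref prio acc q)
      ((daStep pref prio acc q)^[Fintype.card D * Fintype.card H + 1] ∅) :=
    isFixedPt_iterate_of_subset subset_daStep ∅ (by rw [Fintype.card_prod]; omega)
  exact isStable_of_isFixedPt hinj hcons hfix (rejectionsJustified_iterate hinj _)

/-- the matching produced by the doctor-proposing deferred acceptance
algorithm (with responsive hospital preferences, encoded by a strict priority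
`prio h` over doctors, acceptable sets `acc h`, and capacities `q h`) is stable:
individually rational and with no blocking pair. -/
theorem da_stable (pref : D → List H) (prio : H → D → ℕ) (acc : H → Finset D)
    (q : H → ℕ) (hinj : ∀ h, Function.Injective (prio h))
    (hnd : ∀ d, (pref d).Nodup)
    (hcons : ∀ h d d', prio h d < prio h d' → d' ∈ acc h → d ∈ acc h) :
    IsStable pref prio acc q (daMatch pref prio acc q) :=
  da_stable_general pref prio acc q hinj hcons
end

section
/- If the hospital-side choice function C_H satisfies substitutability, the law of aggregate demand, and the irrelevance of rejected contracts, then the cumulative offer (generalized DA) process produces a stable allocation that is doctor-optimal: for any other stable allocation X', every doctor weakly prefers her contract in the DA outcome. -/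
open Finset

variable {D H : Type*} [Fintype D] [DecidableEq D] [Fintype H] [DecidableEq H]

/-- The doctor-side choice from a set of contracts: each doctor keeps her most
preferred acceptable contract (preferences given by the list `pref d` of `d`'s
acceptable hospitals in order of strict preference). -/
def chooseD (pref : D → List H) (Y : Finset (D × H)) : Finset (D × H) :=
  Y.filter (fun p => p.2 ∈ pref p.1 ∧
    ∀ h' ∈ pref p.1, (p.1, h') ∈ Y → (pref p.1).idxOf p.2 ≤ (pref p.1).idxOf h')

/-- Hatfield–Milgrom stability of an allocation `X` with respect to the
hospital-side choice function `CH`. -/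
def StableAlloc (pref : D → List H) (CH : Finset (D × H) → Finset (D × H))
    (X : Finset (D × H)) : Prop :=
  chooseD pref X = X ∧ CH X = X ∧
    ∀ x : D × H, x ∉ X → x ∈ chooseD pref (insert x X) → x ∉ CH (insert x X)

/-- `X ⪰_D X'`: every doctor weakly prefers her contract in `X` to that in `X'`. -/
def WeakPrefD (pref : D → List H) (X X' : Finset (D × H)) : Prop :=
  ∀ d h', (d, h') ∈ X' →
    ∃ h, (d, h) ∈ X ∧ (pref d).idxOf h ≤ (pref d).idxOf h'

/-- The distribution `ξ(X)`: the number of contracts of `X` naming hospital `h`. -/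
def xiDist (X : Finset (D × H)) (h : H) : ℕ :=
  (X.filter (fun p => p.2 = h)).card

/-- Substitutability of a choice function. -/
def Substitutable {α : Type*} [DecidableEq α] (C : Finset α → Finset α) : Prop :=
  ∀ (Y : Finset α) (x x' : α), x ∉ C (insert x Y) → x ∉ C (insert x' (insert x Y))

/-- The law of aggregate demand. -/
def LawOfAggregateDemand {α : Type*} (C : Finset α → Finset α) : Prop :=
  ∀ Y Y' : Finset α, Y' ⊆ Y → (C Y').card ≤ (C Y).card

/-- Irrelevance of rejected contracts. -/
def IRC {α : Type*} [DecidableEq α] (C : Finset α → Finset α) : Prop :=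
  ∀ (Y : Finset α) (x : α), x ∉ C (insert x Y) → C Y = C (insert x Y)

/-- The next contract doctor `d` offers, given the set `A` of contracts already
offered: her best contract not yet offered. -/
def nextOffer (pref : D → List H) (A : Finset (D × H)) (d : D) : Option (D × H) :=
  ((pref d).find? (fun h => decide ((d, h) ∉ A))).map (fun h => (d, h))

/-- One round of the cumulative offer (generalized deferred acceptance) process:
every doctor none of whose contracts is currently held offers her next best
contract. -/
def copStep (pref : D → List H) (CH : Finset (D × H) → Finset (D × H))
    (A : Finset (D × H)) : Finset (D × H) :=
  A ∪ univ.filter (fun p : D × H =>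
    (∀ y ∈ CH A, y.1 ≠ p.1) ∧ nextOffer pref A p.1 = some p)

/-- The outcome of the cumulative offer process: the hospital side's choice from
all contracts offered at termination. -/
def copOutcome (pref : D → List H) (CH : Finset (D × H) → Finset (D × H)) :
    Finset (D × H) :=
  CH ((copStep pref CH)^[Fintype.card D * Fintype.card H + 1] ∅)

/-!
Each round only adds contracts, so after `card (D × H) + 1` rounds the offered set `A` is a fixed
point of `copStep`. Every doctor offers down her list, and by substitutability a rejected contract
stays rejected, so a doctor's only possibly held contract is her least preferred offer; hence
`CH A` is stable: IRC handles contracts already offered, and a doctor with an acceptable contract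
not yet offered must be holding one. For doctor-optimality fix a stable `X`. As long as every
offer is weakly preferred to the offering doctor's `X`-contract, any contract of `CH (A ∪ X)`
outside `X` would block `X`, so `CH (A ∪ X) ⊆ X` and the law of aggregate demand gives
`CH (A ∪ X) = X`: every offered `X`-contract is held. As a doctor only moves down her list when
none of her contracts is held, she never passes her `X`-contract.
-/

theorem List.find?_eq_false_of_idxOf_lt {α : Type*} [DecidableEq α] {p : α → Bool}
    {l : List α} {a b : α} (h : l.find? p = some b) (hlt : l.idxOf a < l.idxOf b) :
    p a = false := by
  obtain ⟨hb, as, bs, rfl, has⟩ := List.find?_eq_some_iff_append.1 h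
  have hbas : b ∉ as := fun hb' => by simpa [hb] using has b hb'
  by_cases haas : a ∈ as
  · simpa using has a haas
  · rw [List.idxOf_append_of_notMem haas, List.idxOf_append_of_notMem hbas] at hlt
    simp at hlt

section ChoiceFunction

variable {α : Type*} [DecidableEq α] {C : Finset α → Finset α}

theorem Substitutable.notMem_of_subset (hS : Substitutable C) {A B : Finset α} (hAB : A ⊆ B)
    {x : α} (hx : x ∈ A) (hr : x ∉ C A) : x ∉ C B := by
  suffices ∀ s : Finset α, x ∉ C (A ∪ s) by
    simpa [union_eq_right.2 hAB] using this B
  intro s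
  induction s using Finset.induction_on with
  | empty => simpa using hr
  | insert a s _ ih =>
    have hxs : insert x (A ∪ s) = A ∪ s := insert_eq_of_mem (mem_union_left _ hx)
    rw [union_insert, ← hxs]
    exact hS _ x a (hxs.symm ▸ ih)

theorem IRC.choice_eq_of_subset (hIRC : IRC C) {Y Y' : Finset α} (hCY : C Y ⊆ Y')
    (hY' : Y' ⊆ Y) : C Y' = C Y := by
  induction Y using Finset.strongInduction generalizing Y' with
  | H Y ih =>
    rcases hY'.ssubset_or_eq with hss | rfl
    · obtain ⟨a, haY, haY'⟩ := exists_of_ssubset hss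
      have hinsert : insert a (Y.erase a) = Y := insert_erase haY
      have herase : C (Y.erase a) = C Y := by
        have hrejected : a ∉ C (insert a (Y.erase a)) := by
          rw [hinsert]
          exact fun ha => haY' (hCY ha)
        rw [hIRC _ _ hrejected, hinsert]
      rw [← herase]
      exact ih _ (erase_ssubset haY) (herase ▸ hCY) (subset_erase.2 ⟨hY', haY'⟩)
    · rfl

omit [DecidableEq α] in
theorem LawOfAggregateDemand.choice_eq_of_subset (hLAD : LawOfAggregateDemand C)
    {X Y : Finset α} (hXY : X ⊆ Y) (hCX : C X = X) (hCY : C Y ⊆ X) : C Y = X :=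
  eq_of_subset_of_card_le hCY (hCX ▸ hLAD Y X hXY)

end ChoiceFunction

theorem Finset.isFixedPt_iterate_of_card_lt {α : Type*} [Fintype α] {f : Finset α → Finset α}
    (hf : ∀ A, A ⊆ f A) {n : ℕ} (hn : Fintype.card α < n) :
    Function.IsFixedPt f (f^[n] ∅) := by
  have key : ∀ k, Function.IsFixedPt f (f^[k] ∅) ∨ k ≤ #(f^[k] ∅) := by
    intro k
    induction k with
    | zero => exact .inr (Nat.zero_le _)
    | succ k ih =>
      rw [Function.iterate_succ_apply']
      by_cases hfix : Function.IsFixedPt f (f^[k] ∅)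
      · exact .inl (hfix.eq.symm ▸ hfix)
      · have := card_lt_card ((hf _).ssubset_of_ne (Ne.symm hfix))
        exact .inr (by have := ih.resolve_left hfix; omega)
  exact (key n).resolve_right fun h => by have := card_le_univ (f^[n] ∅); omega

section CumulativeOffer

variable {pref : D → List H} {CH : Finset (D × H) → Finset (D × H)}

omit [Fintype D] in
theorem StableAlloc.acceptable {X : Finset (D × H)} (hX : StableAlloc pref CH X) {d : D}
    {g : H} (hg : (d, g) ∈ X) : g ∈ pref d :=
  (mem_filter.1 (hX.1.symm ▸ hg : (d, g) ∈ chooseD pref X)).2.1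

omit [Fintype D] [Fintype H] in
theorem nextOffer_eq_some {A : Finset (D × H)} {d : D} {g : H}
    (h : nextOffer pref A d = some (d, g)) :
    g ∈ pref d ∧ (d, g) ∉ A ∧
      ∀ g', (pref d).idxOf g' < (pref d).idxOf g → (d, g') ∈ A := by
  simp only [nextOffer, Option.map_eq_some_iff, Prod.mk.injEq, true_and] at h
  obtain ⟨_, hfind, rfl⟩ := h
  refine ⟨List.mem_of_find?_eq_some hfind, by simpa using List.find?_some hfind, ?_⟩
  intro g' hlt
  simpa using List.find?_eq_false_of_idxOf_lt hfind hlt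

omit [Fintype D] [Fintype H] in
theorem exists_nextOffer_eq_some {A : Finset (D × H)} {d : D} {g : H} (hg : g ∈ pref d)
    (hgA : (d, g) ∉ A) : ∃ g', nextOffer pref A d = some (d, g') := by
  obtain ⟨g', hg'⟩ := Option.isSome_iff_exists.1 <|
    List.find?_isSome (p := fun h => decide ((d, h) ∉ A)).2 ⟨g, hg, by simpa using hgA⟩
  exact ⟨g', by simp only [nextOffer, hg', Option.map_some]⟩

theorem mem_copStep {A : Finset (D × H)} {d : D} {g : H} :
    (d, g) ∈ copStep pref CH A ↔
      (d, g) ∈ A ∨ ((∀ y ∈ CH A, y.1 ≠ d) ∧ nextOffer pref A d = some (d, g)) := by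
  simp [copStep]

theorem subset_copStep (A : Finset (D × H)) : A ⊆ copStep pref CH A :=
  subset_union_left

structure CopInvariant (pref : D → List H) (CH : Finset (D × H) → Finset (D × H))
    (A : Finset (D × H)) : Prop where
  acceptable : ∀ p ∈ A, p.2 ∈ pref p.1
  mem_of_idxOf_lt :
    ∀ d g g', (d, g') ∈ A → (pref d).idxOf g < (pref d).idxOf g' → (d, g) ∈ A
  notMem_choice_of_idxOf_lt :
    ∀ d g g', (d, g') ∈ A → (pref d).idxOf g < (pref d).idxOf g' → (d, g) ∉ CH A

theorem CopInvariant.copStep (hS : Substitutable CH) {A : Finset (D × H)}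
    (hA : CopInvariant pref CH A) : CopInvariant pref CH (copStep pref CH A) := by
  refine ⟨?_, ?_, ?_⟩
  · rintro ⟨d, g⟩ hg
    rcases mem_copStep.1 hg with hg | ⟨-, hnext⟩
    exacts [hA.acceptable _ hg, (nextOffer_eq_some hnext).1]
  · intro d g g' hg' hlt
    rcases mem_copStep.1 hg' with hg' | ⟨-, hnext⟩
    exacts [subset_copStep A (hA.mem_of_idxOf_lt d g g' hg' hlt),
      subset_copStep A ((nextOffer_eq_some hnext).2.2 g hlt)]
  · intro d g g' hg' hlt
    have hrejected : (d, g) ∈ A ∧ (d, g) ∉ CH A := by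
      rcases mem_copStep.1 hg' with hg' | ⟨hnone, hnext⟩
      · exact ⟨hA.mem_of_idxOf_lt d g g' hg' hlt, hA.notMem_choice_of_idxOf_lt d g g' hg' hlt⟩
      · exact ⟨(nextOffer_eq_some hnext).2.2 g hlt, fun h => hnone _ h rfl⟩
    exact hS.notMem_of_subset (subset_copStep A) hrejected.1 hrejected.2

theorem copInvariant_copStep_iterate (hS : Substitutable CH) (n : ℕ) :
    CopInvariant pref CH ((copStep pref CH)^[n] ∅) := by
  induction n with
  | zero => exact ⟨by simp, by simp, by simp⟩
  | succ n ih =>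
    rw [Function.iterate_succ_apply']
    exact ih.copStep hS

theorem isFixedPt_copStep_iterate :
    Function.IsFixedPt (copStep pref CH)
      ((copStep pref CH)^[Fintype.card D * Fintype.card H + 1] ∅) :=
  isFixedPt_iterate_of_card_lt subset_copStep (by simp [Fintype.card_prod])

theorem exists_mem_choice_of_isFixedPt {A : Finset (D × H)}
    (hfix : Function.IsFixedPt (copStep pref CH) A) {d : D} {g : H} (hg : g ∈ pref d)
    (hgA : (d, g) ∉ A) : ∃ g', (d, g') ∈ CH A := by
  by_contra! hnone
  obtain ⟨g', hnext⟩ := exists_nextOffer_eq_some hg hgA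
  have hnone' : ∀ y ∈ CH A, y.1 ≠ d := fun y hy hyd => hnone y.2 (hyd ▸ hy)
  exact (nextOffer_eq_some hnext).2.1 (hfix.eq ▸ mem_copStep.2 (.inr ⟨hnone', hnext⟩))

theorem stableAlloc_choice_of_isFixedPt (hsub : ∀ Y, CH Y ⊆ Y) (hIRC : IRC CH)
    {A : Finset (D × H)} (hinv : CopInvariant pref CH A)
    (hfix : Function.IsFixedPt (copStep pref CH) A) : StableAlloc pref CH (CH A) := by
  refine ⟨?_, hIRC.choice_eq_of_subset Subset.rfl (hsub A), ?_⟩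
  · refine filter_true_of_mem fun ⟨d, g⟩ hg => ⟨hinv.acceptable _ (hsub A hg), ?_⟩
    intro h' _ hh'
    by_contra! hlt
    exact hinv.notMem_choice_of_idxOf_lt d h' g (hsub A hg) hlt hh'
  · rintro ⟨d, g⟩ hgZ hchoose
    obtain ⟨-, hg, hbest⟩ := mem_filter.1 hchoose
    by_cases hgA : (d, g) ∈ A
    · rwa [hIRC.choice_eq_of_subset (subset_insert _ _) (insert_subset hgA (hsub A))]
    · obtain ⟨g', hg'⟩ := exists_mem_choice_of_isFixedPt hfix hg hgA
      have hle : (pref d).idxOf g ≤ (pref d).idxOf g' :=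
        hbest g' (hinv.acceptable _ (hsub A hg')) (mem_insert_of_mem hg')
      have hge : (pref d).idxOf g' ≤ (pref d).idxOf g :=
        not_lt.1 fun hlt => hgA (hinv.mem_of_idxOf_lt d g g' (hsub A hg') hlt)
      obtain rfl : g = g' := (List.idxOf_inj hg).1 (le_antisymm hle hge)
      exact absurd hg' hgZ

omit [Fintype D] in
theorem StableAlloc.mem_choice_of_forall_idxOf_le (hsub : ∀ Y, CH Y ⊆ Y)
    (hS : Substitutable CH) (hLAD : LawOfAggregateDemand CH) {X A : Finset (D × H)}
    (hX : StableAlloc pref CH X) (hacc : ∀ p ∈ A, p.2 ∈ pref p.1)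
    (hle : ∀ d g g', (d, g) ∈ A → (d, g') ∈ X → (pref d).idxOf g ≤ (pref d).idxOf g') :
    ∀ x ∈ X, x ∈ A → x ∈ CH A := by
  have hCX : CH (A ∪ X) = X := by
    refine hLAD.choice_eq_of_subset subset_union_right hX.2.1 fun ⟨d, g⟩ hg => ?_
    by_contra hgX
    have hgA : (d, g) ∈ A := (mem_union.1 (hsub _ hg)).resolve_right hgX
    have hblocking : (d, g) ∈ chooseD pref (insert (d, g) X) := by
      refine mem_filter.2 ⟨mem_insert_self _ _, hacc _ hgA, fun h' _ hh' => ?_⟩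
      rcases mem_insert.1 hh' with hh' | hh'
      · obtain rfl : h' = g := (Prod.mk.inj hh').2
        exact le_rfl
      · exact hle d g h' hgA hh'
    exact hS.notMem_of_subset (insert_subset (mem_union_left _ hgA) subset_union_right)
      (mem_insert_self _ _) (hX.2.2 _ hgX hblocking) hg
  intro x hxX hxA
  by_contra hx
  exact hS.notMem_of_subset subset_union_left hxA hx (hCX ▸ hxX)

theorem StableAlloc.idxOf_le_of_mem_copStep_iterate (hsub : ∀ Y, CH Y ⊆ Y)
    (hS : Substitutable CH) (hLAD : LawOfAggregateDemand CH) {X : Finset (D × H)}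
    (hX : StableAlloc pref CH X) (n : ℕ) :
    ∀ d g g', (d, g) ∈ (copStep pref CH)^[n] ∅ → (d, g') ∈ X →
      (pref d).idxOf g ≤ (pref d).idxOf g' := by
  induction n with
  | zero => simp
  | succ n ih =>
    have hheld := hX.mem_choice_of_forall_idxOf_le hsub hS hLAD
      (copInvariant_copStep_iterate hS n).acceptable ih
    intro d g g' hg hg'
    rw [Function.iterate_succ_apply'] at hg
    rcases mem_copStep.1 hg with hg | ⟨hnone, hnext⟩
    · exact ih d g g' hg hg'
    · by_contra! hlt
      exact hnone _ (hheld _ hg' ((nextOffer_eq_some hnext).2.2 g' hlt)) rfl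

theorem weakPrefD_choice_of_isFixedPt (hsub : ∀ Y, CH Y ⊆ Y) {A X : Finset (D × H)}
    (hfix : Function.IsFixedPt (copStep pref CH) A) (hX : StableAlloc pref CH X)
    (hle : ∀ d g g', (d, g) ∈ A → (d, g') ∈ X → (pref d).idxOf g ≤ (pref d).idxOf g')
    (hheld : ∀ x ∈ X, x ∈ A → x ∈ CH A) : WeakPrefD pref (CH A) X := by
  intro d g' hg'
  by_cases hg'A : (d, g') ∈ A
  · exact ⟨g', hheld _ hg' hg'A, le_rfl⟩
  · obtain ⟨g, hg⟩ := exists_mem_choice_of_isFixedPt hfix (hX.acceptable hg') hg'A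
    exact ⟨g, hg, hle d g g' (hsub A hg) hg'⟩

end CumulativeOffer

theorem cop_stable_doctor_optimal_general
    (pref : D → List H)
    (CH : Finset (D × H) → Finset (D × H)) (hsub : ∀ Y, CH Y ⊆ Y)
    (hS : Substitutable CH) (hLAD : LawOfAggregateDemand CH) (hIRC : IRC CH) :
    StableAlloc pref CH (copOutcome pref CH) ∧
      ∀ X' : Finset (D × H), StableAlloc pref CH X' →
        WeakPrefD pref (copOutcome pref CH) X' := by
  set N := Fintype.card D * Fintype.card H + 1
  have hfix := isFixedPt_copStep_iterate (pref := pref) (CH := CH)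
  have hinv := copInvariant_copStep_iterate (pref := pref) hS N
  refine ⟨stableAlloc_choice_of_isFixedPt hsub hIRC hinv hfix, fun X hX => ?_⟩
  have hle := hX.idxOf_le_of_mem_copStep_iterate hsub hS hLAD N
  exact weakPrefD_choice_of_isFixedPt hsub hfix hX hle
    (hX.mem_choice_of_forall_idxOf_le hsub hS hLAD hinv.acceptable hle)

/-- if the hospital-side choice function satisfies substitutability,
the law of aggregate demand, and the irrelevance of rejected contracts, then the
cumulative offer process produces a stable allocation that is doctor-optimal: every
doctor weakly prefers her contract in its outcome to her contract in any other
stable allocation. -/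
theorem cop_stable_doctor_optimal
    (pref : D → List H) (hnd : ∀ d, (pref d).Nodup)
    (CH : Finset (D × H) → Finset (D × H)) (hsub : ∀ Y, CH Y ⊆ Y)
    (hS : Substitutable CH) (hLAD : LawOfAggregateDemand CH) (hIRC : IRC CH) :
    StableAlloc pref CH (copOutcome pref CH) ∧
      ∀ X' : Finset (D × H), StableAlloc pref CH X' →
        WeakPrefD pref (copOutcome pref CH) X' :=
  cop_stable_doctor_optimal_general pref CH hsub hS hLAD hIRC
end

section
/- If a hospital-side choice function C_H is rationalized by a utility function f : 2^X → ℝ (i.e., f(C_H(Y)) > f(Y') for every Y' ⊆ Y with Y' ≠ C_H(Y)), then C_H satisfies the irrelevance of rejected contracts: x ∉ C_H(Y ∪ {x}) implies C_H(Y) = C_H(Y ∪ {x}). -/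
/-- `f` rationalizes the choice function `C`: for every `Y`, `C Y` is the unique
`f`-maximizer among the subsets of `Y`. -/
def Rationalizes {α : Type*} (C : Finset α → Finset α) (f : Finset α → ℝ) : Prop :=
  ∀ Y : Finset α, ∀ Y' ⊆ Y, Y' ≠ C Y → f Y' < f (C Y)

/-- a choice function rationalized by a utility function satisfies the
irrelevance of rejected contracts. -/
theorem rationalized_implies_irc {α : Type*} [DecidableEq α]
    (C : Finset α → Finset α) (hsub : ∀ Y, C Y ⊆ Y)
    (f : Finset α → ℝ) (hrat : Rationalizes C f) :
    ∀ (Y : Finset α) (x : α), x ∉ C (insert x Y) → C Y = C (insert x Y) := by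
  intro Y x hx
  by_contra hne
  have hA : C (insert x Y) ⊆ Y := by
    intro a ha
    rcases Finset.mem_insert.1 (hsub _ ha) with h | h
    · exact absurd (h ▸ ha) hx
    · exact h
  have h1 : f (C (insert x Y)) < f (C Y) := hrat Y _ hA (Ne.symm hne)
  have h2 : f (C Y) < f (C (insert x Y)) :=
    hrat (insert x Y) _ ((hsub Y).trans (Finset.subset_insert _ _)) hne
  exact absurd (h1.trans h2) (lt_irrefl _)
end

section
/- Suppose the hospital-side choice function C_H in the original market is rationalized by f^F(Y) = g^F(ξ(Y)) + f_R(ξ(Y)) + ε·f_H(Y), where g^F is 0 on feasible distributions and −∞ otherwise, and ε > 0 is sufficiently small. If X is a stable allocation in the original market and x is a contract with x ∈ C_D(X + x), then: (a) ξ(X) maximizes f_R over feasible distributions ξ(X') with X' ⊆ X + x, and (b) among all X' ⊆ X + x with ξ(X') = ξ(X), the set X maximizes f_H. -/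
/-!
Stability makes `X` the choice of the hospitals from `X + x` as well: the choice from `X + x`
rejects `x`, so it lies in `X`, and a rationalizable choice function ignores rejected contracts.
Hence `X` maximizes `f^F` over subsets of `X + x`; since `f^F(∅)` is finite, `ξ(X)` is feasible.
Comparing `f_R + ε·f_H` on feasible subsets, `ε` is too small for `f_H` to compensate any loss
in `f_R`, which gives (a), and when the distributions agree only `ε·f_H` is left, which gives (b).
-/

open Finset

variable {D H : Type*} [Fintype D] [DecidableEq D] [Fintype H] [DecidableEq H]

/-- The distribution of a set of contracts, as a function `H → ℕ`. -/
def distOf (Y : Finset (D × H)) : H → ℕ := fun h => xiDist Y h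

/-- Feasibility of a distribution: hospital capacities and regional caps hold. -/
def FeasDist {R : Type*} [Fintype R] [DecidableEq R] (q : H → ℕ) (region : H → R)
    (qreg : R → ℕ) (v : H → ℕ) : Prop :=
  (∀ h, v h ≤ q h) ∧ ∀ r, ∑ h ∈ univ.filter (fun h => region h = r), v h ≤ qreg r

/-- `f` rationalizes `C` (extended-real-valued utilities): `C Y` is the unique
`f`-maximizer among subsets of `Y`. -/
def RationalizesE {α : Type*} (C : Finset α → Finset α) (f : Finset α → EReal) : Prop :=
  ∀ Y : Finset α, C Y ⊆ Y ∧ ∀ Y' ⊆ Y, Y' ≠ C Y → f Y' < f (C Y)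

namespace RationalizesE

variable {α : Type*} {C : Finset α → Finset α} {f : Finset α → EReal}

theorem le_apply_choice (hf : RationalizesE C f) {Y Y' : Finset α} (hY' : Y' ⊆ Y) :
    f Y' ≤ f (C Y) := by
  by_cases h : Y' = C Y
  · rw [h]
  · exact (hf Y |>.2 Y' hY' h).le

theorem choice_eq_of_choice_subset (hf : RationalizesE C f) {X Y : Finset α} (hXY : X ⊆ Y)
    (hCY : C Y ⊆ X) : C Y = C X := by
  by_contra hne
  have hlt : f (C X) < f (C Y) := (hf Y).2 _ ((hf X).1.trans hXY) (Ne.symm hne)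
  exact (hf X).2 _ hCY hne |>.not_gt hlt

end RationalizesE

omit [Fintype D] in
theorem StableAlloc.choice_insert_eq {pref : D → List H} {CH : Finset (D × H) → Finset (D × H)}
    {f : Finset (D × H) → EReal} (hf : RationalizesE CH f) {X : Finset (D × H)}
    (hX : StableAlloc pref CH X) {x : D × H} (hx : x ∉ X)
    (hxC : x ∈ chooseD pref (insert x X)) : CH (insert x X) = X := by
  have hxCH : x ∉ CH (insert x X) := hX.2.2 x hx hxC
  have hsub : CH (insert x X) ⊆ X := fun y hy => by
    rcases mem_insert.mp ((hf _).1 hy) with rfl | hyX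
    · exact absurd hy hxCH
    · exact hyX
  rw [hf.choice_eq_of_choice_subset (subset_insert x X) hsub, hX.2.1]

theorem le_of_add_mul_le_add_mul {a b s t ε : ℝ} (h : a + ε * s ≤ b + ε * t)
    (hsmall : a ≠ b → ε * (t - s) < |a - b|) : a ≤ b := by
  by_contra! hba
  have := hsmall hba.ne'
  rw [abs_of_pos (sub_pos.mpr hba)] at this
  linarith

section Utility

omit [Fintype D] [DecidableEq D]

variable {R : Type*} [Fintype R] [DecidableEq R] {q : H → ℕ} {region : H → R} {qreg : R → ℕ}

/-- The paper's `f^F`. -/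
noncomputable def combinedUtility (gF : (H → ℕ) → EReal) (fR : (H → ℕ) → ℝ)
    (fH : Finset (D × H) → ℝ) (ε : ℝ) (Y : Finset (D × H)) : EReal :=
  gF (distOf Y) + ((fR (distOf Y) : ℝ) : EReal) + ((ε * fH Y : ℝ) : EReal)

theorem feasDist_distOf_empty : FeasDist q region qreg (distOf (∅ : Finset (D × H))) := by
  simp [FeasDist, distOf, xiDist]

variable {gF : (H → ℕ) → EReal} {fR : (H → ℕ) → ℝ} {fH : Finset (D × H) → ℝ} {ε : ℝ}

theorem combinedUtility_of_feasDist (hg0 : ∀ v, FeasDist q region qreg v → gF v = 0)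
    {Y : Finset (D × H)} (hY : FeasDist q region qreg (distOf Y)) :
    combinedUtility gF fR fH ε Y = ((fR (distOf Y) + ε * fH Y : ℝ) : EReal) := by
  rw [combinedUtility, hg0 _ hY, zero_add, EReal.coe_add]

theorem feasDist_of_combinedUtility_ne_bot (hgbot : ∀ v, ¬ FeasDist q region qreg v → gF v = ⊥)
    {Y : Finset (D × H)} (hY : combinedUtility gF fR fH ε Y ≠ ⊥) :
    FeasDist q region qreg (distOf Y) := by
  by_contra hnf
  exact hY (by rw [combinedUtility, hgbot _ hnf, EReal.bot_add, EReal.bot_add])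

end Utility

theorem stable_maximizes_region_and_hospital_utility_general
    {R : Type*} [Fintype R] [DecidableEq R]
    (pref : D → List H)
    (q : H → ℕ) (region : H → R) (qreg : R → ℕ)
    (CH : Finset (D × H) → Finset (D × H))
    (gF : (H → ℕ) → EReal) (fR : (H → ℕ) → ℝ) (fH : Finset (D × H) → ℝ) (ε : ℝ)
    (hg0 : ∀ v, FeasDist q region qreg v → gF v = 0)
    (hgbot : ∀ v, ¬ FeasDist q region qreg v → gF v = ⊥)
    (hε : 0 < ε)
    (hsmall : ∀ v w, FeasDist q region qreg v → FeasDist q region qreg w →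
      fR v ≠ fR w → ∀ Y Y' : Finset (D × H), ε * (fH Y - fH Y') < |fR v - fR w|)
    (hrat : RationalizesE CH
      (fun Y => gF (distOf Y) + ((fR (distOf Y) : ℝ) : EReal) + ((ε * fH Y : ℝ) : EReal)))
    (X : Finset (D × H)) (hX : StableAlloc pref CH X)
    (x : D × H) (hx : x ∉ X) (hxC : x ∈ chooseD pref (insert x X)) :
    (∀ X' ⊆ insert x X, FeasDist q region qreg (distOf X') →
        fR (distOf X') ≤ fR (distOf X)) ∧
    (∀ X' ⊆ insert x X, distOf X' = distOf X → fH X' ≤ fH X) := by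
  change RationalizesE CH (combinedUtility gF fR fH ε) at hrat
  have hmax : ∀ X' ⊆ insert x X, combinedUtility gF fR fH ε X' ≤ combinedUtility gF fR fH ε X :=
    fun X' hX' => hX.choice_insert_eq hrat hx hxC ▸ hrat.le_apply_choice hX'
  have hfeasX : FeasDist q region qreg (distOf X) := by
    refine feasDist_of_combinedUtility_ne_bot hgbot
      (ne_bot_of_le_ne_bot ?_ (hmax ∅ (empty_subset _)))
    rw [combinedUtility_of_feasDist hg0 feasDist_distOf_empty]
    exact EReal.coe_ne_bot _
  have hmaxR : ∀ X' ⊆ insert x X, FeasDist q region qreg (distOf X') →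
      fR (distOf X') + ε * fH X' ≤ fR (distOf X) + ε * fH X := fun X' hX' hfeas => by
    have := hmax X' hX'
    rwa [combinedUtility_of_feasDist hg0 hfeas, combinedUtility_of_feasDist hg0 hfeasX,
      EReal.coe_le_coe_iff] at this
  refine ⟨fun X' hX' hfeas => ?_, fun X' hX' hdist => ?_⟩
  · exact le_of_add_mul_le_add_mul (hmaxR X' hX' hfeas)
      fun hne => hsmall _ _ hfeas hfeasX hne X X'
  · have := hmaxR X' hX' (hdist ▸ hfeasX)
    rw [hdist, add_le_add_iff_left] at this
    exact le_of_mul_le_mul_left this hε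

/-- suppose the hospital-side choice function `CH` of the original
market is rationalized by `f^F(Y) = g^F(ξ(Y)) + f_R(ξ(Y)) + ε·f_H(Y)` where `g^F`
is `0` on feasible distributions and `⊥` otherwise and `ε > 0` is sufficiently
small.  If `X` is stable and `x ∈ C_D(X + x)`, then (a) `ξ(X)` maximizes `f_R`
over feasible distributions of subsets of `X + x`, and (b) among subsets of
`X + x` with distribution `ξ(X)`, the set `X` maximizes `f_H`. -/
theorem stable_maximizes_region_and_hospital_utility
    {R : Type*} [Fintype R] [DecidableEq R]
    (pref : D → List H) (hnd : ∀ d, (pref d).Nodup)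
    (q : H → ℕ) (region : H → R) (qreg : R → ℕ)
    (CH : Finset (D × H) → Finset (D × H))
    (gF : (H → ℕ) → EReal) (fR : (H → ℕ) → ℝ) (fH : Finset (D × H) → ℝ) (ε : ℝ)
    (hg0 : ∀ v, FeasDist q region qreg v → gF v = 0)
    (hgbot : ∀ v, ¬ FeasDist q region qreg v → gF v = ⊥)
    (hε : 0 < ε)
    (hsmall : ∀ v w, FeasDist q region qreg v → FeasDist q region qreg w →
      fR v ≠ fR w → ∀ Y Y' : Finset (D × H), ε * (fH Y - fH Y') < |fR v - fR w|)
    (hrat : RationalizesE CH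
      (fun Y => gF (distOf Y) + ((fR (distOf Y) : ℝ) : EReal) + ((ε * fH Y : ℝ) : EReal)))
    (X : Finset (D × H)) (hX : StableAlloc pref CH X)
    (x : D × H) (hx : x ∉ X) (hxC : x ∈ chooseD pref (insert x X)) :
    (∀ X' ⊆ insert x X, FeasDist q region qreg (distOf X') →
        fR (distOf X') ≤ fR (distOf X)) ∧
    (∀ X' ⊆ insert x X, distOf X' = distOf X → fH X' ≤ fH X) :=
  stable_maximizes_region_and_hospital_utility_general pref q region qreg CH gF fR fH ε hg0 hgbot hε
    hsmall hrat X hX x hx hxC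
end

section
/- If every doctor finds every hospital in region r acceptable only through contracts counted in ξ, and μ is the FDA outcome, then for every region r the FDA outcome satisfies the regional cap: Σ_{h∈r} |μ_h| ≤ q_r, and for every hospital h the capacity: |μ_h| ≤ q_h; i.e., the FDA algorithm always produces a feasible matching. -/
open Finset

variable {D H : Type*} [Fintype D] [DecidableEq D] [Fintype H] [DecidableEq H]

section FDA

variable {R : Type*} [Fintype R] [DecidableEq R]

/-- Number of doctors currently kept in region `r`. -/
def regionCount (region : H → R) (st : H → Finset D) (r : R) : ℕ :=
  ∑ h ∈ univ.filter (fun h => region h = r), (st h).card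

/-- The best remaining acceptable applicant(s) of hospital `h` (a singleton when
`prio h` is injective): doctors of `pool` not yet kept with minimal priority value. -/
def bestRemaining (prio : H → D → ℕ) (h : H) (pool held : Finset D) : Finset D :=
  (pool \ held).filter (fun d => ∀ d' ∈ pool \ held, prio h d ≤ prio h d')

/-- One turn of hospital `h` in the round-robin stage of the FDA algorithm:
if the regional cap and its own physical capacity are not yet binding, `h`
additionally keeps its best remaining applicant. -/
def fdaTurn (pref : D → List H) (prio : H → D → ℕ) (acc : H → Finset D) (q : H → ℕ)
    (region : H → R) (qreg : R → ℕ) (A : Finset (D × H)) (st : H → Finset D)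
    (h : H) : H → Finset D :=
  if regionCount region st (region h) < qreg (region h) ∧ (st h).card < q h then
    Function.update st h
      (st h ∪ bestRemaining prio h (proposers pref A h ∩ acc h) (st h))
  else st

/-- The doctors kept in region `r` given rejections `A`: first each hospital fills
its target capacity with its best acceptable applicants, then hospitals take turns
in the fixed order `ord r` keeping additional doctors until the regional cap or the
physical capacities bind or the applicant pools empty. -/
def regionKept (pref : D → List H) (prio : H → D → ℕ) (acc : H → Finset D) (q : H → ℕ)
    (region : H → R) (qreg : R → ℕ) (tgt : H → ℕ) (ord : R → List H)
    (A : Finset (D × H)) (r : R) : H → Finset D :=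
  (fun st => (ord r).foldl (fdaTurn pref prio acc q region qreg A) st)^[qreg r + Fintype.card D + 1]
    (fun h => topN prio h (tgt h) (proposers pref A h ∩ acc h))

/-- The doctors tentatively kept by hospital `h` in the FDA algorithm. -/
def fdaKept (pref : D → List H) (prio : H → D → ℕ) (acc : H → Finset D) (q : H → ℕ)
    (region : H → R) (qreg : R → ℕ) (tgt : H → ℕ) (ord : R → List H)
    (A : Finset (D × H)) (h : H) : Finset D :=
  regionKept pref prio acc q region qreg tgt ord A (region h) h

/-- One round of the flexible deferred acceptance algorithm, recorded via the set
of rejections so far. -/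
def fdaStep (pref : D → List H) (prio : H → D → ℕ) (acc : H → Finset D) (q : H → ℕ)
    (region : H → R) (qreg : R → ℕ) (tgt : H → ℕ) (ord : R → List H)
    (A : Finset (D × H)) : Finset (D × H) :=
  A ∪ univ.filter (fun p : D × H =>
    propose pref A p.1 = some p.2 ∧
      p.1 ∉ fdaKept pref prio acc q region qreg tgt ord A p.2)

/-- The outcome of the flexible deferred acceptance (FDA) algorithm. -/
def fdaMatch (pref : D → List H) (prio : H → D → ℕ) (acc : H → Finset D) (q : H → ℕ)
    (region : H → R) (qreg : R → ℕ) (tgt : H → ℕ) (ord : R → List H) (d : D) :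
    Option H :=
  propose pref
    ((fdaStep pref prio acc q region qreg tgt ord)^[Fintype.card D * Fintype.card H + 1] ∅) d

end FDA

/-!
In every round the tentatively kept sets respect all caps: the target stage does because
`∑ tgt ≤ qreg` and `tgt ≤ q`, and a round-robin turn adds at most one doctor (priorities are
strict), and only while neither cap binds. The rejection sets only grow, so after
`|D × H| + 1` rounds they are stationary; there every application is kept, hence the outcome
is contained in the kept sets.
-/

open Function

omit [Fintype H] [DecidableEq H] in
theorem card_bestRemaining_le_one (prio : H → D → ℕ) {h : H}
    (hinj : Injective (prio h)) (pool held : Finset D) :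
    (bestRemaining prio h pool held).card ≤ 1 :=
  card_le_one.2 fun _ ha _ hb =>
    hinj (le_antisymm ((mem_filter.1 ha).2 _ (mem_filter.1 hb).1)
      ((mem_filter.1 hb).2 _ (mem_filter.1 ha).1))

omit [Fintype D] [Fintype H] [DecidableEq H] in
theorem card_topN_le (prio : H → D → ℕ) {h : H} (hinj : Injective (prio h))
    (n : ℕ) (S : Finset D) : (topN prio h n S).card ≤ n := by
  by_contra! hlt
  -- the worst kept doctor would have at least `n` strictly better doctors in `S`
  obtain ⟨d, hd, hmax⟩ := (topN prio h n S).exists_max_image (prio h) (card_pos.1 (by omega))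
  have hbetter : (topN prio h n S).erase d ⊆ S.filter (fun d' => prio h d' < prio h d) := by
    intro d' hd'
    obtain ⟨hne, hd'⟩ := mem_erase.1 hd'
    exact mem_filter.2 ⟨(mem_filter.1 hd').1, (hmax d' hd').lt_of_ne (hinj.ne hne)⟩
  have hcard := card_le_card hbetter
  rw [card_erase_of_mem hd] at hcard
  have := (mem_filter.1 hd).2
  omega

theorem le_card_iterate_of_not_isFixedPt {α : Type*} [DecidableEq α]
    {f : Finset α → Finset α} (hf : ∀ s, s ⊆ f s) :
    ∀ k, ¬ IsFixedPt f (f^[k] ∅) → k + 1 ≤ (f^[k + 1] ∅).card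
  | 0, hk => by
    simp only [iterate_zero, id, IsFixedPt] at hk
    simpa [card_pos, nonempty_iff_ne_empty] using hk
  | k + 1, hk => by
    have hprev : ¬ IsFixedPt f (f^[k] ∅) := fun hfix => by
      rw [iterate_succ_apply'] at hk
      exact hk hfix.apply
    have hgrow : (f^[k + 1] ∅).card < (f^[k + 1 + 1] ∅).card := by
      rw [iterate_succ_apply' f (k + 1)]
      exact card_lt_card ((hf _).ssubset_of_ne (Ne.symm hk))
    have := le_card_iterate_of_not_isFixedPt hf k hprev
    omega

theorem isFixedPt_iterate_of_card_le {α : Type*} [Fintype α] [DecidableEq α]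
    {f : Finset α → Finset α} (hf : ∀ s, s ⊆ f s) {n : ℕ} (hn : Fintype.card α ≤ n) :
    IsFixedPt f (f^[n] ∅) := by
  have hfix : IsFixedPt f (f^[Fintype.card α] ∅) := by
    by_contra hnot
    have := le_card_iterate_of_not_isFixedPt hf _ hnot
    have := card_le_univ (f^[Fintype.card α + 1] ∅)
    omega
  obtain ⟨m, rfl⟩ := Nat.exists_eq_add_of_le' hn
  rw [iterate_add_apply, (hfix.iterate m).eq]
  exact hfix

section Feasible

variable {R : Type*} [DecidableEq R]

def Feasible (q : H → ℕ) (region : H → R) (qreg : R → ℕ) (st : H → Finset D) : Prop :=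
  (∀ h, (st h).card ≤ q h) ∧ ∀ r, regionCount region st r ≤ qreg r

variable {pref : D → List H} {prio : H → D → ℕ} {acc : H → Finset D} {q : H → ℕ}
  {region : H → R} {qreg : R → ℕ} {tgt : H → ℕ} {ord : R → List H} {A : Finset (D × H)}

omit [Fintype D] [DecidableEq D] in
theorem regionCount_update_of_ne (st : H → Finset D) {h : H} {r : R} (hr : region h ≠ r)
    (s : Finset D) : regionCount region (update st h s) r = regionCount region st r := by
  unfold regionCount
  simp_rw [apply_update (fun _ => Finset.card)]
  exact sum_update_of_notMem (by simpa using hr) _ _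

omit [Fintype D] [DecidableEq D] in
theorem regionCount_update_self_add (st : H → Finset D) (h : H) (s : Finset D) :
    regionCount region (update st h s) (region h) + (st h).card =
      regionCount region st (region h) + s.card := by
  have hh : h ∈ univ.filter (fun h' => region h' = region h) := by simp
  unfold regionCount
  simp_rw [apply_update (fun _ => Finset.card)]
  rw [sum_update_of_mem hh, sum_eq_add_sum_sdiff_singleton_of_mem hh]
  ring

theorem feasible_fdaTurn {st : H → Finset D} {h : H} (hinj : Injective (prio h))
    (hst : Feasible q region qreg st) :
    Feasible q region qreg (fdaTurn pref prio acc q region qreg A st h) := by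
  unfold fdaTurn
  split_ifs with hroom
  · set s := st h ∪ bestRemaining prio h (proposers pref A h ∩ acc h) (st h)
    have hs : s.card ≤ (st h).card + 1 :=
      (card_union_le _ _).trans (Nat.add_le_add_left (card_bestRemaining_le_one prio hinj _ _) _)
    refine ⟨fun h' => ?_, fun r => ?_⟩
    · rcases eq_or_ne h' h with rfl | hne
      · rw [update_self]; omega
      · rw [update_of_ne hne]; exact hst.1 h'
    · rcases eq_or_ne (region h) r with rfl | hne
      · have := regionCount_update_self_add (region := region) st h s
        omega
      · rw [regionCount_update_of_ne st hne]; exact hst.2 r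
  · exact hst

theorem feasible_foldl_fdaTurn (hinj : ∀ h, Injective (prio h)) (l : List H)
    {st : H → Finset D} (hst : Feasible q region qreg st) :
    Feasible q region qreg (l.foldl (fdaTurn pref prio acc q region qreg A) st) := by
  induction l generalizing st with
  | nil => exact hst
  | cons h l ih => exact ih (feasible_fdaTurn (hinj h) hst)

omit [Fintype D] [DecidableEq H] in
theorem feasible_topN (hinj : ∀ h, Injective (prio h))
    (htgt : ∀ r, ∑ h ∈ univ.filter (fun h => region h = r), tgt h ≤ qreg r)
    (htq : ∀ h, tgt h ≤ q h) (pool : H → Finset D) :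
    Feasible q region qreg (fun h => topN prio h (tgt h) (pool h)) :=
  ⟨fun h => (card_topN_le prio (hinj h) _ _).trans (htq h),
    fun r => (sum_le_sum fun h _ => card_topN_le prio (hinj h) _ _).trans (htgt r)⟩

theorem feasible_regionKept (hinj : ∀ h, Injective (prio h))
    (htgt : ∀ r, ∑ h ∈ univ.filter (fun h => region h = r), tgt h ≤ qreg r)
    (htq : ∀ h, tgt h ≤ q h) (r : R) :
    Feasible q region qreg (regionKept pref prio acc q region qreg tgt ord A r) :=
  Iterate.rec (Feasible q region qreg) (feasible_topN hinj htgt htq _)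
    (fun _ hst => feasible_foldl_fdaTurn hinj (ord r) hst) _

theorem mem_fdaKept_of_isFixedPt (hA : IsFixedPt (fdaStep pref prio acc q region qreg tgt ord) A)
    {d : D} {h : H} (hd : propose pref A d = some h) :
    d ∈ fdaKept pref prio acc q region qreg tgt ord A h := by
  by_contra hkept
  have hrej : (d, h) ∈ fdaStep pref prio acc q region qreg tgt ord A :=
    mem_union_right _ (mem_filter.2 ⟨mem_univ _, hd, hkept⟩)
  rw [hA.eq] at hrej
  simpa [hrej] using List.find?_some hd

end Feasible

theorem fda_feasible_general
    {R : Type*} [Fintype R] [DecidableEq R]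
    (pref : D → List H) (prio : H → D → ℕ) (acc : H → Finset D) (q : H → ℕ)
    (region : H → R) (qreg : R → ℕ) (tgt : H → ℕ) (ord : R → List H)
    (hinj : ∀ h, Function.Injective (prio h))
    (htgt : ∀ r, ∑ h ∈ univ.filter (fun h => region h = r), tgt h ≤ qreg r)
    (htq : ∀ h, tgt h ≤ q h) :
    (∀ h, (matchedSet (fdaMatch pref prio acc q region qreg tgt ord) h).card ≤ q h) ∧
      ∀ r, ∑ h ∈ univ.filter (fun h => region h = r),
          (matchedSet (fdaMatch pref prio acc q region qreg tgt ord) h).card ≤ qreg r := by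
  set F := fdaStep pref prio acc q region qreg tgt ord
  set A := F^[Fintype.card D * Fintype.card H + 1] ∅
  have hA : IsFixedPt F A :=
    isFixedPt_iterate_of_card_le (fun _ => subset_union_left) (by simp [Fintype.card_prod])
  have hkept := feasible_regionKept (pref := pref) (acc := acc) (ord := ord) (A := A) hinj htgt htq
  have hμ : ∀ h, matchedSet (fdaMatch pref prio acc q region qreg tgt ord) h ⊆
      regionKept pref prio acc q region qreg tgt ord A (region h) h :=
    fun _ _ hd => mem_fdaKept_of_isFixedPt hA (mem_filter.1 hd).2
  refine ⟨fun h => (card_le_card (hμ h)).trans ((hkept (region h)).1 h), fun r => ?_⟩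
  calc _ ≤ regionCount region (regionKept pref prio acc q region qreg tgt ord A r) r :=
        sum_le_sum fun h hh => by rw [← (mem_filter.1 hh).2]; exact card_le_card (hμ h)
    _ ≤ qreg r := (hkept r).2 r

/-- the FDA algorithm always produces a feasible matching: every
hospital's physical capacity and every regional cap are respected by its outcome. -/
theorem fda_feasible
    {R : Type*} [Fintype R] [DecidableEq R]
    (pref : D → List H) (prio : H → D → ℕ) (acc : H → Finset D) (q : H → ℕ)
    (region : H → R) (qreg : R → ℕ) (tgt : H → ℕ) (ord : R → List H)
    (hinj : ∀ h, Function.Injective (prio h)) (hnd : ∀ d, (pref d).Nodup)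
    (hord : ∀ r, (ord r).Nodup ∧ ∀ h, h ∈ ord r ↔ region h = r)
    (htgt : ∀ r, ∑ h ∈ univ.filter (fun h => region h = r), tgt h ≤ qreg r)
    (htq : ∀ h, tgt h ≤ q h) :
    (∀ h, (matchedSet (fdaMatch pref prio acc q region qreg tgt ord) h).card ≤ q h) ∧
      ∀ r, ∑ h ∈ univ.filter (fun h => region h = r),
          (matchedSet (fdaMatch pref prio acc q region qreg tgt ord) h).card ≤ qreg r :=
  fda_feasible_general pref prio acc q region qreg tgt ord hinj htgt htq
end
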